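/- arXiv:1905.00865 — 10 statements merged into one kernel-verified Lean document; each statement's English description precedes it below -/
import Mathlib

section
/- For all real numbers β₁, β₂ with 0 < β₁ < β₂, the function F_{β₁,β₂}(x) := β₁·x − 1 + (β₂·x + 1)·exp(−x·(β₁+β₂)) has exactly one zero x₁ in the open interval (0, ∞), and this zero satisfies x₁ < 1/β₁. -/
/-!
`F(0) = 0` and `F' = β₁ - e^{-sx}(β₁ + β₂ s x)` with `s = β₁ + β₂` also vanishes at `0`. The second
derivative `s e^{-sx}(β₂ s x - (β₂ - β₁))` changes sign once, at a positive point because `β₁ < β₂`,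
so `F'` first decreases below `0` and then increases to its limit `β₁ > 0`: it has a single positive
zero, negative before and positive after. The same argument applied to `F`, which is positive as
soon as `β₁ x ≥ 1`, gives the unique positive zero, and that zero lies below `1 / β₁`.
-/

/-- Hamilton football angle function: `F β₁ β₂ x = β₁x − 1 + (β₂x + 1) e^{−x(β₁+β₂)}`. -/
noncomputable def F (β₁ β₂ x : ℝ) : ℝ :=
  β₁ * x - 1 + (β₂ * x + 1) * Real.exp (-x * (β₁ + β₂))

open Real Set Filter Topology

section SignChange

variable {f : ℝ → ℝ} {a x₀ : ℝ}

theorem exists_sign_change_of_deriv_sign_change (hf : Differentiable ℝ f) (h0 : f 0 = 0)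
    (ha : 0 < a) (hneg : ∀ x ∈ Ioo 0 a, deriv f x < 0) (hpos : ∀ x ∈ Ioi a, 0 < deriv f x)
    (hev : ∀ᶠ x in atTop, 0 < f x) :
    ∃ x₀, a < x₀ ∧ f x₀ = 0 ∧ (∀ x ∈ Ioo 0 x₀, f x < 0) ∧ ∀ x ∈ Ioi x₀, 0 < f x := by
  have hanti : StrictAntiOn f (Icc 0 a) :=
    strictAntiOn_of_deriv_neg (convex_Icc 0 a) hf.continuous.continuousOn
      (by rwa [interior_Icc])
  have hmono : StrictMonoOn f (Ici a) :=
    strictMonoOn_of_deriv_pos (convex_Ici a) hf.continuous.continuousOn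
      (by rwa [interior_Ici])
  have hfa : f a < 0 := h0 ▸ hanti (left_mem_Icc.2 ha.le) (right_mem_Icc.2 ha.le) ha
  obtain ⟨b, hfb, hab⟩ := (hev.and (eventually_gt_atTop a)).exists
  obtain ⟨x₀, ⟨hax₀, -⟩, hfx₀⟩ :=
    intermediate_value_Ioo hab.le hf.continuous.continuousOn ⟨hfa, hfb⟩
  refine ⟨x₀, hax₀, hfx₀, fun x ⟨hx, hxx₀⟩ => ?_, fun x hx => ?_⟩
  · rcases le_or_gt x a with hxa | hax
    · exact h0 ▸ hanti (left_mem_Icc.2 ha.le) ⟨hx.le, hxa⟩ hx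
    · exact hfx₀ ▸ hmono (mem_Ici.2 hax.le) (mem_Ici.2 hax₀.le) hxx₀
  · exact hfx₀ ▸ hmono (mem_Ici.2 hax₀.le) (mem_Ici.2 (hax₀.le.trans (le_of_lt hx))) hx

theorem existsUnique_pos_zero_of_sign_change (hx₀ : 0 < x₀) (hzero : f x₀ = 0)
    (hneg : ∀ x ∈ Ioo 0 x₀, f x < 0) (hpos : ∀ x ∈ Ioi x₀, 0 < f x) :
    ∃! x, 0 < x ∧ f x = 0 := by
  refine ⟨x₀, ⟨hx₀, hzero⟩, fun x ⟨hx, hfx⟩ => ?_⟩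
  rcases lt_trichotomy x x₀ with hlt | heq | hgt
  · exact absurd hfx (hneg x ⟨hx, hlt⟩).ne
  · exact heq
  · exact absurd hfx (hpos x hgt).ne'

end SignChange

noncomputable def F' (β₁ β₂ x : ℝ) : ℝ :=
  β₁ - Real.exp (-x * (β₁ + β₂)) * (β₁ + β₂ * (β₁ + β₂) * x)

section

variable {β₁ β₂ x : ℝ}

theorem hasDerivAt_exp_neg_mul (s x : ℝ) :
    HasDerivAt (fun x => Real.exp (-x * s)) (Real.exp (-x * s) * -s) x := by
  simpa using ((hasDerivAt_id x).neg.mul_const s).exp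

theorem hasDerivAt_F (β₁ β₂ x : ℝ) : HasDerivAt (F β₁ β₂) (F' β₁ β₂ x) x := by
  have hlin (c : ℝ) : HasDerivAt (fun x => c * x) c x := by
    simpa using (hasDerivAt_id x).const_mul c
  refine (((hlin β₁).sub_const 1).add (((hlin β₂).add_const 1).mul
    (hasDerivAt_exp_neg_mul (β₁ + β₂) x))).congr_deriv ?_
  simp only [F']
  ring

theorem deriv_F (β₁ β₂ : ℝ) : deriv (F β₁ β₂) = F' β₁ β₂ :=
  funext fun x => (hasDerivAt_F β₁ β₂ x).deriv

theorem hasDerivAt_F' (β₁ β₂ x : ℝ) :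
    HasDerivAt (F' β₁ β₂)
      ((β₁ + β₂) * Real.exp (-x * (β₁ + β₂)) * (β₂ * (β₁ + β₂) * x - (β₂ - β₁))) x := by
  have hlin : HasDerivAt (fun x => β₁ + β₂ * (β₁ + β₂) * x) (β₂ * (β₁ + β₂)) x := by
    simpa using ((hasDerivAt_id x).const_mul (β₂ * (β₁ + β₂))).const_add β₁
  refine (((hasDerivAt_exp_neg_mul (β₁ + β₂) x).mul hlin).const_sub β₁).congr_deriv ?_
  ring

theorem deriv_F'_neg (hβ₂ : 0 < β₂) (hs : 0 < β₁ + β₂)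
    (hx : x < (β₂ - β₁) / (β₂ * (β₁ + β₂))) : deriv (F' β₁ β₂) x < 0 := by
  rw [(hasDerivAt_F' β₁ β₂ x).deriv]
  rw [lt_div_iff₀ (by positivity)] at hx
  exact mul_neg_of_pos_of_neg (by positivity) (by linarith)

theorem deriv_F'_pos (hβ₂ : 0 < β₂) (hs : 0 < β₁ + β₂)
    (hx : (β₂ - β₁) / (β₂ * (β₁ + β₂)) < x) : 0 < deriv (F' β₁ β₂) x := by
  rw [(hasDerivAt_F' β₁ β₂ x).deriv]
  rw [div_lt_iff₀ (by positivity)] at hx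
  exact mul_pos (by positivity) (by linarith)

theorem tendsto_F'_atTop (hs : 0 < β₁ + β₂) : Tendsto (F' β₁ β₂) atTop (𝓝 β₁) := by
  have hsx : Tendsto (fun x => x * (β₁ + β₂)) atTop atTop := tendsto_id.atTop_mul_const hs
  have hexp : Tendsto (fun x => Real.exp (-(x * (β₁ + β₂)))) atTop (𝓝 0) :=
    tendsto_exp_neg_atTop_nhds_zero.comp hsx
  have hmul : Tendsto (fun x => x * (β₁ + β₂) * Real.exp (-(x * (β₁ + β₂)))) atTop (𝓝 0) :=
    (tendsto_pow_mul_exp_neg_atTop_nhds_zero 1).comp hsx |>.congr fun x => by simp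
  convert ((hexp.const_mul β₁).add (hmul.const_mul β₂)).const_sub β₁ using 1
  · ext x; simp only [F', neg_mul]; ring
  · simp

theorem F_pos_of_one_div_le (h₁ : 0 < β₁) (hβ₂ : 0 ≤ β₂) (hx : 1 / β₁ ≤ x) : 0 < F β₁ β₂ x := by
  have hx₀ : 0 ≤ x := (one_div_pos.2 h₁).le.trans hx
  have hβ₁x : 1 ≤ β₁ * x := by rwa [div_le_iff₀' h₁] at hx
  have : 0 < (β₂ * x + 1) * Real.exp (-x * (β₁ + β₂)) := by positivity
  simp only [F]
  linarith

end

/-- `F_{β₁,β₂}` has exactly one zero in `(0,∞)`, and this zero is `< 1/β₁`. -/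
theorem unique_positive_zero (β₁ β₂ : ℝ) (h₁ : 0 < β₁) (h₂ : β₁ < β₂) :
    (∃! x : ℝ, 0 < x ∧ F β₁ β₂ x = 0) ∧
    (∀ x : ℝ, 0 < x → F β₁ β₂ x = 0 → x < 1 / β₁) := by
  have hβ₂ : 0 < β₂ := h₁.trans h₂
  have hs : 0 < β₁ + β₂ := by positivity
  have hF' : Differentiable ℝ (F' β₁ β₂) := fun x => (hasDerivAt_F' β₁ β₂ x).differentiableAt
  have hF : Differentiable ℝ (F β₁ β₂) := fun x => (hasDerivAt_F β₁ β₂ x).differentiableAt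
  have hxs : 0 < (β₂ - β₁) / (β₂ * (β₁ + β₂)) := div_pos (sub_pos.2 h₂) (by positivity)
  obtain ⟨x₀, hx₀, -, hF'_neg, hF'_pos⟩ :=
    exists_sign_change_of_deriv_sign_change hF' (by simp [F']) hxs
      (fun x hx => deriv_F'_neg hβ₂ hs hx.2) (fun x hx => deriv_F'_pos hβ₂ hs hx)
      ((tendsto_F'_atTop hs).eventually_const_lt h₁)
  obtain ⟨x₁, hx₁, hFx₁, hF_neg, hF_pos⟩ :=
    exists_sign_change_of_deriv_sign_change (a := x₀) hF (by simp [F]) (hxs.trans hx₀)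
      (by rwa [deriv_F]) (by rwa [deriv_F])
      ((eventually_ge_atTop (1 / β₁)).mono fun x => F_pos_of_one_div_le h₁ hβ₂.le)
  exact ⟨existsUnique_pos_zero_of_sign_change (hxs.trans (hx₀.trans hx₁)) hFx₁ hF_neg hF_pos,
    fun x _ hFx => lt_of_not_ge fun hx => (F_pos_of_one_div_le h₁ hβ₂.le hx).ne' hFx⟩
end

section
/- For all real numbers β₁, β₂ with 0 < β₁ < β₂, letting x₁ denote the unique positive zero of F_{β₁,β₂}, the function F_{β₁,β₂} is strictly negative on the open interval (0, x₁) and strictly positive on (x₁, ∞). -/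
/-!
`F` vanishes to second order at `0` with `F''(0) = (β₁ + β₂)(β₁ - β₂) < 0`, so it is negative just
to the right of `0`, while `F x ≥ β₁ x - 1` makes it positive for large `x`. A continuous function
without zeros on an interval has constant sign there, and `x₁` is the only zero on `(0, ∞)`.
-/

open Filter Real Set Topology

lemma continuous_F (β₁ β₂ : ℝ) : Continuous (F β₁ β₂) := by
  unfold F
  fun_prop

/-- The factor on the left is `1 + t + t² / 2 ≤ exp t` for `t = (β₁ + β₂) x`. -/
lemma quadratic_mul_F_le {β₁ β₂ x : ℝ} (hs : 0 ≤ β₁ + β₂) (hβ₂ : 0 ≤ β₂) (hx : 0 ≤ x) :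
    (1 + (β₁ + β₂) * x + ((β₁ + β₂) * x) ^ 2 / 2) * F β₁ β₂ x ≤
      (β₁ + β₂) * x ^ 2 / 2 * (β₁ - β₂ + (β₁ + β₂) * β₁ * x) := by
  set t := (β₁ + β₂) * x with ht_def
  set q := 1 + t + t ^ 2 / 2
  have hexp : exp (-x * (β₁ + β₂)) * exp t = 1 := by
    rw [← exp_add, ht_def, show -x * (β₁ + β₂) + (β₁ + β₂) * x = 0 by ring, exp_zero]
  have hdecay : (β₂ * x + 1) * exp (-x * (β₁ + β₂)) * q ≤ β₂ * x + 1 :=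
    calc (β₂ * x + 1) * exp (-x * (β₁ + β₂)) * q
        ≤ (β₂ * x + 1) * exp (-x * (β₁ + β₂)) * exp t := by
          gcongr
          exact quadratic_le_exp_of_nonneg (mul_nonneg hs hx)
      _ = β₂ * x + 1 := by rw [mul_assoc, hexp, mul_one]
  calc q * F β₁ β₂ x = q * (β₁ * x - 1) + (β₂ * x + 1) * exp (-x * (β₁ + β₂)) * q := by
        unfold F; ring
    _ ≤ q * (β₁ * x - 1) + (β₂ * x + 1) := by linarith
    _ = (β₁ + β₂) * x ^ 2 / 2 * (β₁ - β₂ + (β₁ + β₂) * β₁ * x) := by ring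

lemma eventually_F_neg_nhdsGT {β₁ β₂ : ℝ} (h₁ : 0 < β₁) (h₂ : β₁ < β₂) :
    ∀ᶠ x in 𝓝[>] 0, F β₁ β₂ x < 0 := by
  have hs : 0 < β₁ + β₂ := by linarith
  have hδ : 0 < (β₂ - β₁) / ((β₁ + β₂) * β₁) :=
    div_pos (by linarith) (by positivity)
  filter_upwards [Ioo_mem_nhdsGT hδ] with x ⟨hx, hxδ⟩
  have hlin : β₁ - β₂ + (β₁ + β₂) * β₁ * x < 0 := by
    rw [lt_div_iff₀ (by positivity)] at hxδ
    linarith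
  have hbound : (1 + (β₁ + β₂) * x + ((β₁ + β₂) * x) ^ 2 / 2) * F β₁ β₂ x < 0 :=
    (quadratic_mul_F_le hs.le (h₁.trans h₂).le hx.le).trans_lt
      (mul_neg_of_pos_of_neg (by positivity) hlin)
  exact neg_of_mul_neg_right hbound (by positivity)

lemma eventually_F_pos_atTop {β₁ β₂ : ℝ} (h₁ : 0 < β₁) (hβ₂ : 0 ≤ β₂) :
    ∀ᶠ x in atTop, 0 < F β₁ β₂ x := by
  filter_upwards [eventually_gt_atTop β₁⁻¹] with x hx
  have hx₀ : 0 < x := (inv_pos.mpr h₁).trans hx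
  have hlin : 1 < β₁ * x := by rwa [inv_lt_iff_one_lt_mul₀' h₁] at hx
  have hdecay : 0 ≤ (β₂ * x + 1) * exp (-x * (β₁ + β₂)) := by positivity
  unfold F
  linarith

theorem sign_of_F_general (β₁ β₂ x₁ : ℝ) (h₁ : 0 < β₁) (h₂ : β₁ < β₂)
    (hx₁ : 0 < x₁)
    (huniq : ∀ y : ℝ, 0 < y → F β₁ β₂ y = 0 → y = x₁) :
    (∀ x ∈ Set.Ioo 0 x₁, F β₁ β₂ x < 0) ∧
    (∀ x ∈ Set.Ioi x₁, 0 < F β₁ β₂ x) := by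
  constructor
  · have hneg : ∃ y ∈ Ioo 0 x₁, F β₁ β₂ y < 0 :=
      ((eventually_F_neg_nhdsGT h₁ h₂).and (Ioo_mem_nhdsGT hx₁)).exists.imp
        fun _ hy ↦ ⟨hy.2, hy.1⟩
    exact fun x hx ↦ isPreconnected_Ioo.gt_of_ne (continuous_F β₁ β₂).continuousOn
      (fun y hy hFy ↦ hy.2.ne (huniq y hy.1 hFy)) hneg hx
  · have hpos : ∃ y ∈ Ioi x₁, 0 < F β₁ β₂ y :=
      ((eventually_F_pos_atTop h₁ (h₁.trans h₂).le).and (eventually_gt_atTop x₁)).exists.imp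
        fun _ hy ↦ ⟨hy.2, hy.1⟩
    exact fun x hx ↦ isPreconnected_Ioi.lt_of_ne (continuous_F β₁ β₂).continuousOn
      (fun y hy hFy ↦ hy.ne' (huniq y (hx₁.trans hy) hFy)) hpos hx

/-- Letting `x₁` be the unique positive zero of `F_{β₁,β₂}`, the function is strictly
negative on `(0,x₁)` and strictly positive on `(x₁,∞)`. -/
theorem sign_of_F (β₁ β₂ x₁ : ℝ) (h₁ : 0 < β₁) (h₂ : β₁ < β₂)
    (hx₁ : 0 < x₁) (hz : F β₁ β₂ x₁ = 0)
    (huniq : ∀ y : ℝ, 0 < y → F β₁ β₂ y = 0 → y = x₁) :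
    (∀ x ∈ Set.Ioo 0 x₁, F β₁ β₂ x < 0) ∧
    (∀ x ∈ Set.Ioi x₁, 0 < F β₁ β₂ x) :=
  sign_of_F_general β₁ β₂ x₁ h₁ h₂ hx₁ huniq
end

section
/- For every ε ∈ (0,1) there exists δ > 0 such that for all real numbers β₁, β₂ with 0 < β₁ < β₂ and β₁/β₂ < δ, one has F_{β₁,β₂}((1−ε)/β₁) < 0; consequently the unique positive zero a(β₁,β₂) of F_{β₁,β₂} satisfies (1−ε)/β₁ < a(β₁,β₂) < 1/β₁. -/
lemma quad_le_exp {t : ℝ} (ht : 0 ≤ t) : 1 + t + t ^ 2 / 2 ≤ Real.exp t := by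
  have h := Real.sum_le_exp_of_nonneg ht 3
  simp [Finset.sum_range_succ] at h
  nlinarith [h]

lemma exp_neg_le_quad {u : ℝ} (hu : 0 ≤ u) : Real.exp (-u) ≤ 1 - u + u ^ 2 / 2 := by
  have h := quad_le_exp hu
  have hp := Real.exp_pos u
  have hq : (0:ℝ) < 1 - u + u ^ 2 / 2 := by nlinarith [sq_nonneg (u - 1)]
  have h1 : 1 / Real.exp u ≤ 1 - u + u ^ 2 / 2 := by
    rw [div_le_iff₀ hp]
    nlinarith [mul_le_mul_of_nonneg_left h hq.le, sq_nonneg (u ^ 2)]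
  rw [Real.exp_neg, ← one_div]
  exact h1

lemma F_neg {ε β₁ β₂ x : ℝ} (hε0 : 0 < ε) (hε1 : ε < 1) (hβ₁ : 0 < β₁) (hβ : β₁ < β₂)
    (hr : β₁ / β₂ < ε / 2) (hx : 0 < x) (hux : β₁ * x ≤ 1 - ε) : F β₁ β₂ x < 0 := by
  have hβ₂ : 0 < β₂ := hβ₁.trans hβ
  set r := β₁ / β₂ with hrdef
  set t := β₂ * x with htdef
  set u := β₁ * x with hudef
  have hr0 : 0 < r := div_pos hβ₁ hβ₂
  have hr1 : r < 1 := (div_lt_one hβ₂).mpr hβ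
  have ht0 : 0 < t := mul_pos hβ₂ hx
  have hu0 : 0 < u := mul_pos hβ₁ hx
  have hurt : u = r * t := by rw [hudef, htdef, hrdef]; field_simp
  set E := Real.exp (-t) with hE
  set D := Real.exp (-u) with hD
  have hE0 : 0 < E := Real.exp_pos _
  have hD0 : 0 < D := Real.exp_pos _
  have hEt : E * (1 + t + t ^ 2 / 2) ≤ 1 := by
    have h := quad_le_exp ht0.le
    calc E * (1 + t + t ^ 2 / 2) ≤ E * Real.exp t := mul_le_mul_of_nonneg_left h hE0.le
    _ = 1 := by rw [hE, ← Real.exp_add]; simp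
  have hDq : D ≤ 1 - u + u ^ 2 / 2 := exp_neg_le_quad hu0.le
  have hFx : F β₁ β₂ x = u - 1 + (t + 1) * (E * D) := by
    rw [F, hE, hD, ← Real.exp_add]
    have h9 : -x * (β₁ + β₂) = -t + -u := by rw [htdef, hudef]; ring
    rw [h9]
  rw [hFx]
  have h4 : (t + 1) * r ^ 2 < ε := by nlinarith
  set P := (t + 1) * E with hP
  have hP0 : 0 < P := by positivity
  have step1 : (t + 1) * (E * D) ≤ P * (1 - u + u ^ 2 / 2) := by
    have h := mul_le_mul_of_nonneg_left hDq hP0.le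
    calc (t + 1) * (E * D) = P * D := by rw [hP]; ring
    _ ≤ P * (1 - u + u ^ 2 / 2) := h
  have hPle : P ≤ 1 - E * (t ^ 2 / 2) := by rw [hP]; nlinarith
  have h1u : ε ≤ 1 - u := by linarith
  have hB : ε * (E * (t ^ 2 / 2)) ≤ (1 - u) * (1 - P) := by
    have h1 : E * (t ^ 2 / 2) ≤ 1 - P := by linarith
    have h2 : (0:ℝ) ≤ E * (t ^ 2 / 2) := by positivity
    nlinarith
  have hC : P * (u ^ 2 / 2) < ε * (E * (t ^ 2 / 2)) := by
    have h1 : P * (u ^ 2 / 2) = (t + 1) * r ^ 2 * (E * (t ^ 2 / 2)) := by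
      rw [hP, hurt]; ring
    rw [h1]
    exact mul_lt_mul_of_pos_right h4 (by positivity)
  nlinarith [step1]

/-- For every `ε ∈ (0,1)` there is `δ > 0` so that whenever `0 < β₁ < β₂` and `β₁/β₂ < δ`,
one has `F_{β₁,β₂}((1−ε)/β₁) < 0`, and hence the unique positive zero of `F_{β₁,β₂}` lies
in `((1−ε)/β₁, 1/β₁)`. -/
theorem zero_location_small_ratio (ε : ℝ) (hε : ε ∈ Set.Ioo (0 : ℝ) 1) :
    ∃ δ > (0 : ℝ), ∀ β₁ β₂ : ℝ, 0 < β₁ → β₁ < β₂ → β₁ / β₂ < δ →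
      F β₁ β₂ ((1 - ε) / β₁) < 0 ∧
      ∀ a : ℝ, 0 < a → F β₁ β₂ a = 0 → (1 - ε) / β₁ < a ∧ a < 1 / β₁ := by
  obtain ⟨hε0, hε1⟩ := hε
  refine ⟨ε / 2, by linarith, fun β₁ β₂ hβ₁ hβ hr => ?_⟩
  have hβ₂ : 0 < β₂ := hβ₁.trans hβ
  have hx0 : 0 < (1 - ε) / β₁ := div_pos (by linarith) hβ₁
  have hmain : F β₁ β₂ ((1 - ε) / β₁) < 0 :=
    F_neg hε0 hε1 hβ₁ hβ hr hx0 (by rw [mul_div_cancel₀]; exact hβ₁.ne')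
  refine ⟨hmain, fun a ha hFa => ?_⟩
  constructor
  · by_contra h
    push_neg at h
    have : F β₁ β₂ a < 0 := F_neg hε0 hε1 hβ₁ hβ hr ha (by
      rw [mul_comm]; exact (le_div_iff₀ hβ₁).mp h)
    linarith [hFa ▸ this]
  · by_contra h
    push_neg at h
    have h1 : 1 ≤ β₁ * a := by rw [div_le_iff₀ hβ₁] at h; linarith [h]
    have h2 : 0 < (β₂ * a + 1) * Real.exp (-a * (β₁ + β₂)) := by positivity
    have : 0 < F β₁ β₂ a := by rw [F]; nlinarith
    linarith
end

section
/- For any sequences (β₁ⁿ), (β₂ⁿ) of real numbers with 0 < β₁ⁿ < β₂ⁿ for all n and β₁ⁿ/β₂ⁿ → 0, the products a(β₁ⁿ,β₂ⁿ)·β₁ⁿ converge to 1, where a(β₁ⁿ,β₂ⁿ) is the unique positive zero of F_{β₁ⁿ,β₂ⁿ}. -/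
set_option maxHeartbeats 1600000 in
lemma key_lemma (b1 b2 A : ℝ) (hb1 : 0 < b1) (hb : b1 < b2) (hA : 0 < A)
    (hF : F b1 b2 A = 0) : 1 - 4 * (b1 / b2) ≤ A * b1 ∧ A * b1 ≤ 1 := by
  have hb2 : 0 < b2 := hb1.trans hb
  have ht : 0 < A * b1 := mul_pos hA hb1
  have hx : 0 < A * b2 := mul_pos hA hb2
  -- rewrite the zero equation
  have harg : -A * (b1 + b2) = -(A * b1 + A * b2) := by ring
  rw [F, harg] at hF
  obtain ⟨u, w, hu_def, hw_def⟩ :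
      ∃ u w : ℝ, u = Real.exp (A * b1) ∧ w = Real.exp (A * b2 / 2) := ⟨_, _, rfl, rfl⟩
  have hu0 : 0 < u := hu_def ▸ Real.exp_pos _
  have hw0 : 0 < w := hw_def ▸ Real.exp_pos _
  have hvw : Real.exp (A * b2) = w ^ 2 := by
    rw [hw_def, sq, ← Real.exp_add]; ring_nf
  have hEinv : Real.exp (-(A * b1 + A * b2)) = (u * w ^ 2)⁻¹ := by
    rw [Real.exp_neg, Real.exp_add, hvw, hu_def]
  rw [hEinv] at hF
  have huw2 : 0 < u * w ^ 2 := by positivity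
  have hmul : (1 - A * b1) * (u * w ^ 2) = A * b2 + 1 := by
    field_simp at hF
    linarith [hF]
  -- positivity of 1 - A*b1
  have h1mt : 0 < 1 - A * b1 := by
    nlinarith [hmul, huw2, hx]
  have hu : 1 + A * b1 ≤ u := by
    rw [hu_def]
    have := Real.add_one_le_exp (A * b1)
    linarith
  have hw : 1 + A * b2 / 2 ≤ w := by
    rw [hw_def]
    have := Real.add_one_le_exp (A * b2 / 2)
    linarith
  -- h1 : (1 - t^2) w^2 ≤ x + 1
  have h1 : (1 - (A * b1) ^ 2) * w ^ 2 ≤ A * b2 + 1 := by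
    nlinarith [hmul, mul_le_mul_of_nonneg_left hu h1mt.le, sq_nonneg w, hw0]
  -- h2 : x + 1 + x^2/4 ≤ w^2
  have h2 : A * b2 + 1 + (A * b2) ^ 2 / 4 ≤ w ^ 2 := by
    nlinarith [mul_le_mul hw hw (by positivity) (le_trans (by positivity) hw)]
  -- h3a : x^2 ≤ 4 t^2 w^2
  have h3a : (A * b2) ^ 2 ≤ 4 * (A * b1) ^ 2 * w ^ 2 := by nlinarith [h1, h2]
  -- h3 : b2 ≤ 2 b1 w
  have h3b : A * b2 ≤ 2 * (A * b1) * w := by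
    have h' : (A * b2) ^ 2 ≤ (2 * (A * b1) * w) ^ 2 := by nlinarith [h3a]
    exact (pow_le_pow_iff_left₀ hx.le (by positivity) two_ne_zero).mp h'
  have h3 : b2 ≤ 2 * b1 * w := by
    have h'' : A * b2 ≤ A * (2 * b1 * w) := by linarith [h3b]
    exact le_of_mul_le_mul_left h'' hA
  have h4 : A * b2 + 1 ≤ 2 * w := by linarith
  have hu1 : (1:ℝ) ≤ u := by linarith
  have hA1 : (1 - A * b1) * 1 ≤ (1 - A * b1) * u :=
    mul_le_mul_of_nonneg_left hu1 h1mt.le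
  have hA2 : (1 - A * b1) * 1 * w ^ 2 ≤ (1 - A * b1) * u * w ^ 2 :=
    mul_le_mul_of_nonneg_right hA1 (sq_nonneg w)
  have h5a : (1 - A * b1) * w ^ 2 ≤ 2 * w := by nlinarith [hA2, hmul, h4]
  have h5 : (1 - A * b1) * w ≤ 2 := by
    have h5b : (1 - A * b1) * w * w ≤ 2 * w := by nlinarith [h5a]
    exact le_of_mul_le_mul_right h5b hw0
  have hkey : (1 - A * b1) * b2 ≤ 4 * b1 := by
    nlinarith [mul_le_mul_of_nonneg_left h3 h1mt.le,
      mul_le_mul_of_nonneg_left h5 (by positivity : (0:ℝ) ≤ 2 * b1)]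
  constructor
  · have h7 : 1 - A * b1 ≤ 4 * b1 / b2 := (le_div_iff₀ hb2).mpr hkey
    have h8 : 4 * (b1 / b2) = 4 * b1 / b2 := by ring
    linarith
  · linarith

/-- If `β₁ⁿ/β₂ⁿ → 0` then `a(β₁ⁿ,β₂ⁿ)·β₁ⁿ → 1`, where `a(β₁ⁿ,β₂ⁿ)` is the unique positive
zero of `F_{β₁ⁿ,β₂ⁿ}`. -/
theorem a_beta1_tendsto_one (β₁ β₂ a : ℕ → ℝ)
    (h : ∀ n, 0 < β₁ n ∧ β₁ n < β₂ n)
    (hratio : Filter.Tendsto (fun n => β₁ n / β₂ n) Filter.atTop (nhds 0))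
    (ha : ∀ n, 0 < a n ∧ F (β₁ n) (β₂ n) (a n) = 0) :
    Filter.Tendsto (fun n => a n * β₁ n) Filter.atTop (nhds 1) := by
  have key := fun n => key_lemma (β₁ n) (β₂ n) (a n) (h n).1 (h n).2 (ha n).1 (ha n).2
  have hlow : Filter.Tendsto (fun n => 1 - 4 * (β₁ n / β₂ n)) Filter.atTop (nhds 1) := by
    have h1 : Filter.Tendsto (fun n => 4 * (β₁ n / β₂ n)) Filter.atTop (nhds 0) := by
      simpa using hratio.const_mul 4
    simpa using (tendsto_const_nhds (x := (1:ℝ)) (f := Filter.atTop)).sub h1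
  exact tendsto_of_tendsto_of_tendsto_of_le_of_le hlow tendsto_const_nhds
    (fun n => (key n).1) (fun n => (key n).2)
end

section
/- Let 0 < β₁ < β₂ and let a be the unique positive zero of F_{β₁,β₂}, so that a ∈ (0, 1/β₁). Then the function φ(τ) := (aβ₁ − 1)(e^{aτ} − 1)/a² + τ/a is strictly positive for every τ in the open interval (0, β₁+β₂). -/
/-!
With `c = 1 − aβ₁` and `S = a(β₁ + β₂)`, the equation `F(a) = 0` says `c (e^S − 1) = S`, and
`a² φ(τ) = s − c (e^s − 1)` for `s = aτ ∈ (0, S)`. Since the secant slope `(e^s − 1)/s` of the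
strictly convex exponential is strictly increasing in `s`, it stays below its value `1/c` at `S`.
-/

open Real Set

lemma mul_exp_sub_one_lt_of_mul_exp_sub_one_eq {c S s : ℝ} (hcS : c * (exp S - 1) = S)
    (hs : 0 < s) (hsS : s < S) : c * (exp s - 1) < s := by
  have hS : 0 < S := hs.trans hsS
  have hc : 0 < c := pos_of_mul_pos_left (hcS ▸ hS) (by linarith [add_one_lt_exp hS.ne'])
  have hslope : (exp s - 1) / s < (exp S - 1) / S := by
    simpa using strictConvexOn_exp.secant_strict_mono (mem_univ 0) (mem_univ s) (mem_univ S)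
      hs.ne' hS.ne' hsS
  calc c * (exp s - 1) = c * s * ((exp s - 1) / s) := by field_simp
    _ < c * s * ((exp S - 1) / S) := by gcongr
    _ = s := by field_simp; linear_combination hcS

lemma F_mul_exp (β₁ β₂ x : ℝ) :
    F β₁ β₂ x * exp (x * (β₁ + β₂)) =
      x * (β₁ + β₂) - (1 - β₁ * x) * (exp (x * (β₁ + β₂)) - 1) := by
  have hinv : exp (-x * (β₁ + β₂)) * exp (x * (β₁ + β₂)) = 1 := by
    rw [← exp_add]; simp
  unfold F
  linear_combination (β₂ * x + 1) * hinv

lemma F_eq_zero_iff {β₁ β₂ x : ℝ} :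
    F β₁ β₂ x = 0 ↔ (1 - β₁ * x) * (exp (x * (β₁ + β₂)) - 1) = x * (β₁ + β₂) := by
  rw [← mul_left_inj' (exp_pos (x * (β₁ + β₂))).ne', zero_mul, F_mul_exp, sub_eq_zero, eq_comm]

theorem profile_positive_general (β₁ β₂ a : ℝ)
    (ha : 0 < a) (hz : F β₁ β₂ a = 0)
    (φ : ℝ → ℝ)
    (hφ : ∀ τ, φ τ = (a * β₁ - 1) * (Real.exp (a * τ) - 1) / a ^ 2 + τ / a) :
    ∀ τ ∈ Set.Ioo (0 : ℝ) (β₁ + β₂), 0 < φ τ := by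
  rintro τ ⟨hτ0, hτ⟩
  have hsecant := mul_exp_sub_one_lt_of_mul_exp_sub_one_eq (F_eq_zero_iff.1 hz)
    (mul_pos ha hτ0) (mul_lt_mul_of_pos_left hτ ha)
  have hφτ : φ τ = (a * τ - (1 - β₁ * a) * (exp (a * τ) - 1)) / a ^ 2 := by
    rw [hφ]; field_simp; ring
  rw [hφτ]
  exact div_pos (sub_pos.2 hsecant) (by positivity)

/-- If `a ∈ (0, 1/β₁)` is the unique positive zero of `F_{β₁,β₂}`, then the profile
`φ(τ) = (aβ₁−1)(e^{aτ}−1)/a² + τ/a` is strictly positive on `(0, β₁+β₂)`. -/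
theorem profile_positive (β₁ β₂ a : ℝ) (h₁ : 0 < β₁) (h₂ : β₁ < β₂)
    (ha : 0 < a) (ha' : a < 1 / β₁) (hz : F β₁ β₂ a = 0)
    (huniq : ∀ y : ℝ, 0 < y → F β₁ β₂ y = 0 → y = a)
    (φ : ℝ → ℝ)
    (hφ : ∀ τ, φ τ = (a * β₁ - 1) * (Real.exp (a * τ) - 1) / a ^ 2 + τ / a) :
    ∀ τ ∈ Set.Ioo (0 : ℝ) (β₁ + β₂), 0 < φ τ :=
  profile_positive_general β₁ β₂ a ha hz φ hφ
end

section
/- Let 0 < β₁ < β₂ and let a be the unique positive zero of F_{β₁,β₂}, and set φ(τ) := (aβ₁ − 1)(e^{aτ} − 1)/a² + τ/a. Then the Gaussian curvature K(τ) := −φ''(τ) equals (1 − aβ₁)·e^{aτ}; it is strictly positive and strictly increasing on [0, β₁+β₂], and its supremum over [0, β₁+β₂] equals 1 + aβ₂. -/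
open Real

lemma hasDerivAt_exp_mul (a τ : ℝ) : HasDerivAt (fun t => exp (a * t)) (a * exp (a * τ)) τ := by
  simpa [mul_comm] using ((hasDerivAt_id τ).const_mul a).exp

section Potential

variable {a : ℝ} (c : ℝ)

lemma deriv_potential (ha : a ≠ 0) :
    deriv (fun t => c * (exp (a * t) - 1) / a ^ 2 + t / a) =
      fun τ => c * exp (a * τ) / a + 1 / a := by
  funext τ
  refine ((((hasDerivAt_exp_mul a τ).sub_const 1).const_mul c).div_const (a ^ 2)
    |>.add ((hasDerivAt_id τ).div_const a)).deriv.trans ?_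
  field_simp

lemma deriv_deriv_potential (ha : a ≠ 0) (τ : ℝ) :
    deriv (deriv fun t => c * (exp (a * t) - 1) / a ^ 2 + t / a) τ = c * exp (a * τ) := by
  rw [deriv_potential c ha]
  refine (((hasDerivAt_exp_mul a τ).const_mul c).div_const a |>.add_const (1 / a)).deriv.trans ?_
  field_simp

end Potential

lemma one_sub_mul_exp_eq_of_F_eq_zero {β₁ β₂ a : ℝ} (hz : F β₁ β₂ a = 0) :
    (1 - a * β₁) * exp (a * (β₁ + β₂)) = 1 + a * β₂ := by
  have hinv : exp (-a * (β₁ + β₂)) * exp (a * (β₁ + β₂)) = 1 := by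
    rw [← exp_add]; ring_nf; exact exp_zero
  have := congrArg (· * exp (a * (β₁ + β₂))) hz
  simp only [F, zero_mul] at this
  linear_combination -this + (β₂ * a + 1) * hinv

lemma strictMono_const_mul_exp_mul {c a : ℝ} (hc : 0 < c) (ha : 0 < a) :
    StrictMono fun τ => c * exp (a * τ) :=
  (exp_strictMono.comp (strictMono_mul_left_of_pos ha)).const_mul hc

theorem gaussian_curvature_general (β₁ β₂ a : ℝ) (h₁ : 0 < β₁) (h₂ : β₁ < β₂)
    (ha : 0 < a) (ha' : a < 1 / β₁) (hz : F β₁ β₂ a = 0)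
    (φ : ℝ → ℝ)
    (hφ : ∀ τ, φ τ = (a * β₁ - 1) * (Real.exp (a * τ) - 1) / a ^ 2 + τ / a) :
    (∀ τ : ℝ, -(deriv (deriv φ) τ) = (1 - a * β₁) * Real.exp (a * τ)) ∧
    (∀ τ ∈ Set.Icc (0 : ℝ) (β₁ + β₂), 0 < -(deriv (deriv φ) τ)) ∧
    StrictMonoOn (fun τ => -(deriv (deriv φ) τ)) (Set.Icc (0 : ℝ) (β₁ + β₂)) ∧
    IsGreatest ((fun τ => -(deriv (deriv φ) τ)) '' Set.Icc (0 : ℝ) (β₁ + β₂))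
      (1 + a * β₂) := by
  have hK : (fun τ => -(deriv (deriv φ) τ)) = fun τ => (1 - a * β₁) * exp (a * τ) := by
    funext τ
    rw [funext hφ, deriv_deriv_potential _ ha.ne']
    ring
  have hc : 0 < 1 - a * β₁ := by
    have := (lt_div_iff₀ h₁).mp ha'
    linarith
  have hmono := strictMono_const_mul_exp_mul hc ha
  have hmax : IsGreatest (Set.Icc 0 (β₁ + β₂)) (β₁ + β₂) := isGreatest_Icc (by linarith)
  refine ⟨congrFun hK, fun τ _ => ?_, ?_, ?_⟩ <;> simp only [congrFun hK]
  · positivity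
  · exact hmono.strictMonoOn _
  · rw [← one_sub_mul_exp_eq_of_F_eq_zero hz]
    exact hmono.map_isGreatest.mpr hmax

/-- With `a ∈ (0,1/β₁)` the unique positive zero of `F_{β₁,β₂}` and
`φ(τ) = (aβ₁−1)(e^{aτ}−1)/a² + τ/a`, the Gaussian curvature `K(τ) = −φ''(τ)` equals
`(1−aβ₁)e^{aτ}`; it is strictly positive and strictly increasing on `[0, β₁+β₂]`, and its
supremum there equals `1 + aβ₂`. -/
theorem gaussian_curvature (β₁ β₂ a : ℝ) (h₁ : 0 < β₁) (h₂ : β₁ < β₂)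
    (ha : 0 < a) (ha' : a < 1 / β₁) (hz : F β₁ β₂ a = 0)
    (huniq : ∀ y : ℝ, 0 < y → F β₁ β₂ y = 0 → y = a)
    (φ : ℝ → ℝ)
    (hφ : ∀ τ, φ τ = (a * β₁ - 1) * (Real.exp (a * τ) - 1) / a ^ 2 + τ / a) :
    (∀ τ : ℝ, -(deriv (deriv φ) τ) = (1 - a * β₁) * Real.exp (a * τ)) ∧
    (∀ τ ∈ Set.Icc (0 : ℝ) (β₁ + β₂), 0 < -(deriv (deriv φ) τ)) ∧
    StrictMonoOn (fun τ => -(deriv (deriv φ) τ)) (Set.Icc (0 : ℝ) (β₁ + β₂)) ∧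
    IsGreatest ((fun τ => -(deriv (deriv φ) τ)) '' Set.Icc (0 : ℝ) (β₁ + β₂))
      (1 + a * β₂) :=
  gaussian_curvature_general β₁ β₂ a h₁ h₂ ha ha' hz φ hφ
end

section
/- For any sequences (β₁ⁿ), (β₂ⁿ) with 0 < β₁ⁿ < β₂ⁿ and β₁ⁿ/β₂ⁿ → 0, letting aⁿ := a(β₁ⁿ,β₂ⁿ) be the unique positive zero of F_{β₁ⁿ,β₂ⁿ}, the supremum of the Gaussian curvature, 1 + aⁿ·β₂ⁿ, tends to infinity. -/
/-- If `β₁ⁿ/β₂ⁿ → 0`, then the supremum `1 + aⁿβ₂ⁿ` of the Gaussian curvature of the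
football solitons tends to infinity, where `aⁿ` is the unique positive zero of
`F_{β₁ⁿ,β₂ⁿ}`. -/
theorem curvature_sup_tendsto_atTop (β₁ β₂ a : ℕ → ℝ)
    (h : ∀ n, 0 < β₁ n ∧ β₁ n < β₂ n)
    (hratio : Filter.Tendsto (fun n => β₁ n / β₂ n) Filter.atTop (nhds 0))
    (ha : ∀ n, 0 < a n ∧ F (β₁ n) (β₂ n) (a n) = 0) :
    Filter.Tendsto (fun n => 1 + a n * β₂ n) Filter.atTop Filter.atTop := by
  have key : ∀ n, β₂ n / β₁ n - 1 ≤ 1 + a n * β₂ n := by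
    intro n
    obtain ⟨hb1, hb12⟩ := h n
    obtain ⟨han, hFn⟩ := ha n
    have hb2 : 0 < β₂ n := hb1.trans hb12
    set u := a n * β₁ n with hu_def
    set t := a n * β₂ n with ht_def
    have hu : 0 < u := mul_pos han hb1
    have ht : 0 < t := mul_pos han hb2
    -- rewrite F = 0 as (1 - u) = (1 + t) * exp (-(u+t))
    have hFn' : u - 1 + (t + 1) * Real.exp (-(u + t)) = 0 := by
      have harg : -(a n) * (β₁ n + β₂ n) = -(u + t) := by rw [hu_def, ht_def]; ring
      unfold F at hFn
      rw [harg, mul_comm (β₁ n) (a n), mul_comm (β₂ n) (a n), ← hu_def, ← ht_def] at hFn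
      linarith [hFn]
    -- rearrange: (t+1) * exp(-(u+t)) = 1-u
    have heq0 : (t + 1) * Real.exp (-(u + t)) = 1 - u := by linarith
    have h1 : t + 1 = (1 - u) * Real.exp (u + t) := by
      have hEx : Real.exp (-(u + t)) * Real.exp (u + t) = 1 := by
        rw [← Real.exp_add, show -(u + t) + (u + t) = 0 by ring, Real.exp_zero]
      calc t + 1 = (t + 1) * (Real.exp (-(u + t)) * Real.exp (u + t)) := by rw [hEx, mul_one]
        _ = ((t + 1) * Real.exp (-(u + t))) * Real.exp (u + t) := by ring
        _ = (1 - u) * Real.exp (u + t) := by rw [heq0]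
    have hu1 : u < 1 := by
      by_contra hc
      push_neg at hc
      have hle : (1 - u) * Real.exp (u + t) ≤ 0 :=
        mul_nonpos_of_nonpos_of_nonneg (by linarith) (Real.exp_pos _).le
      linarith
    have hA : 1 - u ^ 2 ≤ (1 - u) * Real.exp u := by
      nlinarith [Real.add_one_le_exp u, hu1]
    have hB : (1 + t / 2) ^ 2 ≤ Real.exp t := by
      have hsum : Real.exp (t / 2) * Real.exp (t / 2) = Real.exp t := by
        rw [← Real.exp_add]; ring_nf
      nlinarith [Real.add_one_le_exp (t / 2), Real.exp_pos (t / 2), hsum, ht]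
    have h1' : t + 1 = (1 - u) * Real.exp u * Real.exp t := by
      rw [h1, Real.exp_add]; ring
    have step1 : (1 - u ^ 2) * Real.exp t ≤ t + 1 := by
      have := mul_le_mul_of_nonneg_right hA (Real.exp_pos t).le
      linarith [h1']
    have step2 : (1 - u ^ 2) * (1 + t / 2) ^ 2 ≤ (1 - u ^ 2) * Real.exp t :=
      mul_le_mul_of_nonneg_left hB (by nlinarith [hu, hu1])
    have hsq : (1 - u ^ 2) * (1 + t / 2) ^ 2 ≤ t + 1 := le_trans step2 step1
    have hfin : t ≤ u * (2 + t) := by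
      nlinarith [hsq, hu, ht, mul_pos hu ht, mul_pos hu (show (0:ℝ) < 2 + t by linarith)]
    have hub : β₂ n / β₁ n ≤ 2 + t := by
      rw [div_le_iff₀ hb1]
      have h5 : a n * β₂ n ≤ a n * (β₁ n * (2 + t)) := by nlinarith [hfin]
      have h6 : β₂ n ≤ β₁ n * (2 + t) := le_of_mul_le_mul_left h5 han
      linarith
    linarith
  have hpos : ∀ n, 0 < β₁ n / β₂ n := fun n => div_pos (h n).1 ((h n).1.trans (h n).2)
  have h0 : Filter.Tendsto (fun n => β₁ n / β₂ n) Filter.atTop (nhdsWithin 0 (Set.Ioi 0)) :=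
    tendsto_nhdsWithin_of_tendsto_nhds_of_eventually_within _ hratio
      (Filter.Eventually.of_forall fun n => hpos n)
  have hβ : Filter.Tendsto (fun n => β₂ n / β₁ n) Filter.atTop Filter.atTop := by
    have hinv := h0.inv_tendsto_nhdsGT_zero
    have heqf : (fun n => β₁ n / β₂ n)⁻¹ = fun n => β₂ n / β₁ n := by
      funext n; simp [Pi.inv_apply, inv_div]
    rwa [heqf] at hinv
  have hβ' : Filter.Tendsto (fun n => β₂ n / β₁ n - 1) Filter.atTop Filter.atTop := by
    simpa [sub_eq_add_neg] using Filter.tendsto_atTop_add_const_right Filter.atTop (-1) hβ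
  exact Filter.tendsto_atTop_mono key hβ'
end

section
/- Fix L > 0 and k ∈ ℕ. For any sequences (β₁ⁿ), (β₂ⁿ) with 0 < β₁ⁿ < β₂ⁿ, β₁ⁿ/β₂ⁿ → 0, and L < aⁿ(β₁ⁿ+β₂ⁿ) for all large n (where aⁿ is the unique positive zero of F_{β₁ⁿ,β₂ⁿ} and φⁿ(τ) := (aⁿβ₁ⁿ − 1)(e^{aⁿτ} − 1)/(aⁿ)² + τ/aⁿ), the functions u ↦ (aⁿ/β₂ⁿ)·φⁿ(β₁ⁿ+β₂ⁿ − u/aⁿ) converge to u ↦ (e^u − 1)/e^u uniformly on [0,L] together with their derivatives up to order k; that is, for each j ≤ k, the j-th derivatives converge uniformly on [0,L]. -/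
/-!
Write `x = a β₂` and `t = a β₁`. The equation `F β₁ β₂ a = 0` says `(1 - t) e^{t + x} = x + 1`, and
substituting this into the profile turns it into `g + x⁻¹ (g - id)` with `g u = 1 - e^{-u} = (eᵘ - 1)/eᵘ`.
So everything reduces to `x → ∞`. Combining `eᵗ ≥ 1 + t` with `eˣ ≥ 1 + x + x²/2` gives
`(1 - t²)(1 + x + x²/2) ≤ x + 1`, hence `x ≤ t (x + 2)`, i.e. `β₂/β₁ ≤ x + 2`, and `β₂/β₁ → ∞`.
-/

open Filter Real Topology

lemma one_sub_mul_mul_exp_eq_of_F_eq_zero {β₁ β₂ a : ℝ} (hF : F β₁ β₂ a = 0) :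
    (1 - a * β₁) * exp (a * (β₁ + β₂)) = a * β₂ + 1 := by
  have hexp : exp (-a * (β₁ + β₂)) * exp (a * (β₁ + β₂)) = 1 := by
    rw [← exp_add, neg_mul, neg_add_cancel, exp_zero]
  unfold F at hF
  linear_combination -exp (a * (β₁ + β₂)) * hF + (β₂ * a + 1) * hexp

lemma div_le_mul_add_two_of_F_eq_zero {β₁ β₂ a : ℝ} (hβ₁ : 0 < β₁) (hβ₂ : 0 < β₂) (ha : 0 < a)
    (hF : F β₁ β₂ a = 0) : β₂ / β₁ ≤ a * β₂ + 2 := by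
  have hzero := one_sub_mul_mul_exp_eq_of_F_eq_zero hF
  rw [mul_add, exp_add, ← mul_assoc] at hzero
  set t := a * β₁
  set x := a * β₂
  have ht : 0 < t := mul_pos ha hβ₁
  have hx : 0 < x := mul_pos ha hβ₂
  have ht1 : 0 < 1 - t := by
    by_contra! h
    nlinarith [mul_nonpos_of_nonpos_of_nonneg h (exp_pos t).le, exp_pos x]
  have hquad : (1 - t ^ 2) * (1 + x + x ^ 2 / 2) ≤ x + 1 := calc
    (1 - t ^ 2) * (1 + x + x ^ 2 / 2) = (1 - t) * (t + 1) * (1 + x + x ^ 2 / 2) := by ring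
    _ ≤ (1 - t) * exp t * exp x := by
      gcongr
      exacts [add_one_le_exp t, quadratic_le_exp_of_nonneg hx.le]
    _ = x + 1 := hzero
  -- `1 - t² ≤ 2 (x + 1) / (x² + 2x + 2) ≤ 4 (x + 1) / (x + 2)² = 1 - (x / (x + 2))²`
  have hxt : x ≤ t * (x + 2) := by nlinarith [sq_nonneg x, mul_pos ht hx]
  rw [div_le_iff₀ hβ₁]
  refine le_of_mul_le_mul_left ?_ ha
  calc a * β₂ ≤ a * β₁ * (x + 2) := hxt
    _ = a * ((x + 2) * β₁) := by ring

lemma tendsto_mul_atTop_of_F_eq_zero {ι : Type*} {l : Filter ι} {β₁ β₂ a : ι → ℝ}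
    (hβ₁ : ∀ n, 0 < β₁ n) (hβ₂ : ∀ n, 0 < β₂ n) (ha : ∀ n, 0 < a n)
    (hF : ∀ n, F (β₁ n) (β₂ n) (a n) = 0) (hratio : Tendsto (fun n => β₁ n / β₂ n) l (𝓝 0)) :
    Tendsto (fun n => a n * β₂ n) l atTop := by
  have hinv : Tendsto (fun n => β₂ n / β₁ n) l atTop := by
    have hpos : Tendsto (fun n => β₁ n / β₂ n) l (𝓝[>] 0) :=
      tendsto_nhdsWithin_iff.mpr ⟨hratio, .of_forall fun n => div_pos (hβ₁ n) (hβ₂ n)⟩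
    exact hpos.inv_tendsto_nhdsGT_zero.congr fun n => inv_div _ _
  refine tendsto_atTop_mono (fun n => ?_) (tendsto_atTop_add_const_right _ (-2) hinv)
  linarith [div_le_mul_add_two_of_F_eq_zero (hβ₁ n) (hβ₂ n) (ha n) (hF n)]

lemma rescaled_profile_eq_of_F_eq_zero {β₁ β₂ a : ℝ} (hβ₂ : β₂ ≠ 0) (ha : a ≠ 0)
    (hF : F β₁ β₂ a = 0) (u : ℝ) :
    (a / β₂) * ((a * β₁ - 1) * (exp (a * (β₁ + β₂ - u / a)) - 1) / a ^ 2
      + (β₁ + β₂ - u / a) / a)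
      = (1 - exp (-u)) + (a * β₂)⁻¹ * (1 - exp (-u) - u) := by
  have hzero := one_sub_mul_mul_exp_eq_of_F_eq_zero hF
  have hexp : exp (a * (β₁ + β₂ - u / a)) = exp (a * (β₁ + β₂)) * exp (-u) := by
    rw [← exp_add, mul_sub, mul_div_cancel₀ u ha, sub_eq_add_neg]
  rw [hexp]
  field_simp
  linear_combination (-exp (-u)) * hzero

lemma iter_deriv_add_const_mul {𝕜 : Type*} [NontriviallyNormedField 𝕜] {f g : 𝕜 → 𝕜}
    {n : ℕ} (hf : ContDiff 𝕜 n f) (hg : ContDiff 𝕜 n g) (c : 𝕜) :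
    deriv^[n] (fun u => f u + c * g u) = fun u => deriv^[n] f u + c * deriv^[n] g u := by
  ext u
  simp only [← iteratedDeriv_eq_iterate]
  rw [iteratedDeriv_fun_add hf.contDiffAt (contDiff_const.mul hg).contDiffAt,
    iteratedDeriv_const_mul_field]

lemma tendstoUniformlyOn_add_mul_of_tendsto_zero {α ι : Type*} [TopologicalSpace α] {K : Set α}
    (hK : IsCompact K) {f g : α → ℝ} (hg : ContinuousOn g K) {l : Filter ι} {c : ι → ℝ}
    (hc : Tendsto c l (𝓝 0)) :
    TendstoUniformlyOn (fun n u => f u + c n * g u) f l K := by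
  obtain ⟨C, hC⟩ := hK.exists_bound_of_continuousOn hg
  rw [Metric.tendstoUniformlyOn_iff]
  intro ε hε
  have hsmall : ∀ᶠ n in l, |c n| < ε / (|C| + 1) := by
    simpa only [Real.dist_eq, sub_zero] using Metric.tendsto_nhds.mp hc _ (by positivity)
  filter_upwards [hsmall] with n hn u hu
  calc dist (f u) (f u + c n * g u) = |c n| * ‖g u‖ := by
        rw [Real.dist_eq, sub_add_cancel_left, abs_neg, abs_mul, Real.norm_eq_abs]
    _ ≤ |c n| * (|C| + 1) := by
        gcongr
        exact (hC u hu).trans ((le_abs_self C).trans (lt_add_one _).le)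
    _ < ε / (|C| + 1) * (|C| + 1) := by gcongr
    _ = ε := div_mul_cancel₀ _ (by positivity)

theorem rescaled_profile_Ck_convergence_general (L : ℝ) (k : ℕ)
    (β₁ β₂ a : ℕ → ℝ)
    (h : ∀ n, 0 < β₁ n ∧ β₁ n < β₂ n)
    (hratio : Filter.Tendsto (fun n => β₁ n / β₂ n) Filter.atTop (nhds 0))
    (ha : ∀ n, 0 < a n ∧ F (β₁ n) (β₂ n) (a n) = 0) :
    ∀ j ≤ k,
      TendstoUniformlyOn
        (fun n => deriv^[j] (fun u =>
          (a n / β₂ n) *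
            ((a n * β₁ n - 1) * (Real.exp (a n * (β₁ n + β₂ n - u / a n)) - 1) / (a n) ^ 2
              + (β₁ n + β₂ n - u / a n) / a n)))
        (deriv^[j] (fun u => (Real.exp u - 1) / Real.exp u))
        Filter.atTop (Set.Icc 0 L) := by
  intro j _
  have hβ₂ (n : ℕ) : 0 < β₂ n := (h n).1.trans (h n).2
  set g : ℝ → ℝ := fun u => 1 - exp (-u)
  have hg : ContDiff ℝ j g := by fun_prop
  have hprofile (n : ℕ) : (fun u => (a n / β₂ n) *
      ((a n * β₁ n - 1) * (exp (a n * (β₁ n + β₂ n - u / a n)) - 1) / (a n) ^ 2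
        + (β₁ n + β₂ n - u / a n) / a n)) = fun u => g u + (a n * β₂ n)⁻¹ * (g u - u) :=
    funext <| rescaled_profile_eq_of_F_eq_zero (hβ₂ n).ne' (ha n).1.ne' (ha n).2
  have htarget : (fun u => (exp u - 1) / exp u) = g := by
    ext u
    rw [show g u = 1 - exp (-u) from rfl, exp_neg, sub_div, div_self (exp_pos u).ne', one_div]
  have hg' : ContDiff ℝ j (fun u => g u - u) := hg.sub contDiff_id
  simp only [hprofile, htarget, iter_deriv_add_const_mul hg hg']
  have hcont : Continuous (deriv^[j] (fun u => g u - u)) := by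
    rw [← iteratedDeriv_eq_iterate]
    exact hg'.continuous_iteratedDeriv j le_rfl
  exact tendstoUniformlyOn_add_mul_of_tendsto_zero isCompact_Icc hcont.continuousOn
    (tendsto_mul_atTop_of_F_eq_zero (fun n => (h n).1) hβ₂ (fun n => (ha n).1) (fun n => (ha n).2)
      hratio).inv_tendsto_atTop

/-- Lemma 5 of the paper: as `β₁ⁿ/β₂ⁿ → 0` the rescaled profiles
`u ↦ (aⁿ/β₂ⁿ)·φⁿ(β₁ⁿ+β₂ⁿ−u/aⁿ)` converge to `u ↦ (eᵘ−1)/eᵘ` in `Cᵏ([0,L])`, i.e., all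
derivatives up to order `k` converge uniformly on `[0,L]`. -/
theorem rescaled_profile_Ck_convergence (L : ℝ) (hL : 0 < L) (k : ℕ)
    (β₁ β₂ a : ℕ → ℝ)
    (h : ∀ n, 0 < β₁ n ∧ β₁ n < β₂ n)
    (hratio : Filter.Tendsto (fun n => β₁ n / β₂ n) Filter.atTop (nhds 0))
    (ha : ∀ n, 0 < a n ∧ F (β₁ n) (β₂ n) (a n) = 0)
    (hdom : ∀ᶠ n in Filter.atTop, L < a n * (β₁ n + β₂ n)) :
    ∀ j ≤ k,
      TendstoUniformlyOn
        (fun n => deriv^[j] (fun u =>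
          (a n / β₂ n) *
            ((a n * β₁ n - 1) * (Real.exp (a n * (β₁ n + β₂ n - u / a n)) - 1) / (a n) ^ 2
              + (β₁ n + β₂ n - u / a n) / a n)))
        (deriv^[j] (fun u => (Real.exp u - 1) / Real.exp u))
        Filter.atTop (Set.Icc 0 L) :=
  rescaled_profile_Ck_convergence_general L k β₁ β₂ a h hratio ha
end

section
/- Let β ∈ [0,1]. For any sequences (β₁ⁿ), (β₂ⁿ) with 0 < β₁ⁿ < β₂ⁿ ≤ 1, β₁ⁿ/β₂ⁿ → 0 and β₂ⁿ → β, letting aⁿ be the unique positive zero of F_{β₁ⁿ,β₂ⁿ} and φⁿ(τ) := (aⁿβ₁ⁿ − 1)(e^{aⁿτ} − 1)/(aⁿ)² + τ/aⁿ, for every fixed u > 0 the two coefficient functions of the rescaled football metric (β₂ⁿ/2)·aⁿ·g_{Foot,β₁ⁿ,β₂ⁿ} in the coordinate u := aⁿ(β₁ⁿ+β₂ⁿ−τ), namely β₂ⁿ/(4aⁿφⁿ) (coefficient of du⊗du) and β₂ⁿ·aⁿ·φⁿ (coefficient of dθ⊗dθ), evaluated at τ = β₁ⁿ+β₂ⁿ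 − u/aⁿ, converge respectively to e^u/(4(e^u−1)) and β²·(e^u−1)/e^u, which are the coefficients of the cone-cigar metric g_{Cigar,β} = (dr⊗dr + β²r²dθ⊗dθ)/(1+r²) under the substitution u = log(1+r²). -/
open Filter

lemma exp_ge_quad (x : ℝ) (hx : 0 ≤ x) : 1 + x + x^2/4 ≤ Real.exp x := by
  have h := Real.add_one_le_exp (x/2)
  have hx2 : (0:ℝ) ≤ x/2 + 1 := by linarith
  have hsq : (x/2 + 1)^2 ≤ (Real.exp (x/2))^2 := by nlinarith [Real.exp_pos (x/2)]
  have he : (Real.exp (x/2))^2 = Real.exp x := by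
    rw [sq, ← Real.exp_add]; congr 1; ring
  nlinarith

lemma decr_aux (c t : ℝ) (hc : 0 ≤ c) (h : c ≤ t) :
    (1+t)*Real.exp (-t) ≤ (1+c)*Real.exp (-c) := by
  have h1 : 1 + (t - c) ≤ Real.exp (t - c) := by linarith [Real.add_one_le_exp (t-c)]
  have h2 : Real.exp (t-c) * Real.exp (-t) = Real.exp (-c) := by
    rw [← Real.exp_add]; congr 1; ring
  have h3 := mul_le_mul_of_nonneg_right h1 (le_of_lt (Real.exp_pos (-t)))
  have hmono : Real.exp (-t) ≤ Real.exp (-c) := Real.exp_le_exp.2 (by linarith)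
  nlinarith [mul_le_mul_of_nonneg_left hmono hc]

lemma key_ineq (b1 b2 av : ℝ) (hb1 : 0 < b1) (hb2 : 0 < b2) (hav : 0 < av)
    (hF : F b1 b2 av = 0) :
    1 - (b1*av)^2 ≤ (b2*av+1) * Real.exp (-(b2*av)) := by
  set s := b1*av with hs
  set t := b2*av with htd
  have hFe : s - 1 + (t+1)*Real.exp (-(s+t)) = 0 := by
    have hh : -(s+t) = -av*(b1+b2) := by rw [hs, htd]; ring
    rw [hh]; simpa [F] using hF
  have hsplit : Real.exp (-(s+t)) = Real.exp (-s) * Real.exp (-t) := by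
    rw [← Real.exp_add]; congr 1; ring
  have hexps : (1+s) * Real.exp (-s) ≤ 1 := by
    have h1 : 1 + s ≤ Real.exp s := by linarith [Real.add_one_le_exp s]
    have h2 : Real.exp s * Real.exp (-s) = 1 := by rw [← Real.exp_add]; simp
    nlinarith [Real.exp_pos (-s)]
  have h2 : 1 - s^2 = (t+1)*Real.exp (-t) * ((1+s)*Real.exp (-s)) := by
    linear_combination -(1+s)*hFe + (1+s)*(t+1)*hsplit
  rw [h2]
  have hpos : 0 ≤ (t+1)*Real.exp (-t) := by
    have ht0 : 0 < t := mul_pos hb2 hav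
    positivity
  calc (t+1)*Real.exp (-t) * ((1+s)*Real.exp (-s)) ≤ (t+1)*Real.exp (-t) * 1 :=
        mul_le_mul_of_nonneg_left hexps hpos
    _ = (t+1)*Real.exp (-t) := by ring

lemma small_case (r t : ℝ) (hr0 : 0 < r) (hr25 : r < 2/5) (ht0 : 0 < t)
    (hhalf : t ≤ 1/2) (hkey : 1 - (r*t)^2 ≤ (t+1)*Real.exp (-t)) : False := by
  have hq := exp_ge_quad t (le_of_lt ht0)
  have hprod : Real.exp (-t) * Real.exp t = 1 := by rw [← Real.exp_add]; simp
  have hrt0 : 0 < r*t := mul_pos hr0 ht0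
  have hrt : r*t < 1/5 := by nlinarith
  have hrt1 : (r*t)^2 < 1 := by nlinarith
  have h3 : (1 - (r*t)^2) * Real.exp t ≤ (t+1) * (Real.exp (-t) * Real.exp t) := by
    nlinarith [Real.exp_pos t]
  rw [hprod] at h3
  have h4 : (1 - (r*t)^2) * (1 + t + t^2/4) ≤ (t+1) := by
    nlinarith [Real.exp_pos t]
  have h6 : t^2/4 ≤ (r^2*t^2)*(1 + t + t^2/4) := by nlinarith
  have h7 : 1 + t + t^2/4 ≤ 25/16 := by nlinarith
  have h8 : r^2 < 4/25 := by nlinarith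
  nlinarith [sq_nonneg t, mul_pos ht0 ht0]

lemma large_case (r t C' : ℝ) (hr0 : 0 < r) (ht0 : 0 < t) (hC0 : 0 < C')
    (hrC : r < 1/(5*C')) (htC : t < C') (hhalf : 1/2 < t)
    (hkey : 1 - (r*t)^2 ≤ (t+1)*Real.exp (-t)) : False := by
  have hmono := decr_aux (1/2) t (by norm_num) (le_of_lt hhalf)
  have hq := exp_ge_quad (1/2) (by norm_num)
  have hprod : Real.exp (-(1/2:ℝ)) * Real.exp (1/2:ℝ) = 1 := by
    rw [← Real.exp_add]; simp
  have hexphalf : Real.exp (-(1/2:ℝ)) ≤ 16/25 := by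
    nlinarith [Real.exp_pos (-(1/2:ℝ)), Real.exp_pos ((1/2:ℝ))]
  have h5 : (t+1)*Real.exp (-t) ≤ 24/25 := by nlinarith
  have hrt : r*t < 1/5 := by
    have h1 : r * t < (1/(5*C')) * C' := by
      apply mul_lt_mul'' hrC htC (le_of_lt hr0) (le_of_lt ht0)
    have h2 : (1/(5*C')) * C' = 1/5 := by field_simp
    linarith
  have hrt0 : 0 < r*t := mul_pos hr0 ht0
  nlinarith

lemma phi_formula (b1 b2 av u : ℝ) (hav : av ≠ 0) (hF : F b1 b2 av = 0) :
    (av * b1 - 1) * (Real.exp (av * (b1 + b2 - u / av)) - 1) / av ^ 2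
      + (b1 + b2 - u / av) / av
    = ((av * b2 + 1) * (1 - Real.exp (-u)) - u) / av ^ 2 := by
  have h1 : (b2*av+1) * Real.exp (-(av*(b1+b2))) = 1 - b1*av := by
    have hh : -(av*(b1+b2)) = -av*(b1+b2) := by ring
    rw [hh]
    have := hF
    simp only [F] at this
    linarith
  have h2 : Real.exp (-(av*(b1+b2))) * Real.exp (av*(b1+b2)) = 1 := by
    rw [← Real.exp_add]; simp
  have hE : b2*av + 1 = (1 - b1*av) * Real.exp (av*(b1+b2)) := by
    linear_combination Real.exp (av*(b1+b2)) * h1 - (b2*av+1) * h2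
  have hexp : Real.exp (av*(b1+b2-u/av)) = Real.exp (av*(b1+b2)) * Real.exp (-u) := by
    rw [← Real.exp_add]; congr 1; field_simp; ring
  rw [hexp]
  have h3 : (av*b1-1)*(Real.exp (av*(b1+b2)) * Real.exp (-u) - 1)
      = 1 - av*b1 - (av*b2+1)*Real.exp (-u) := by
    linear_combination Real.exp (-u) * hE
  rw [h3]
  field_simp
  ring

lemma tendsto_t (β₁ β₂ a : ℕ → ℝ)
    (h : ∀ n, 0 < β₁ n ∧ β₁ n < β₂ n ∧ β₂ n ≤ 1)
    (hratio : Tendsto (fun n => β₁ n / β₂ n) atTop (nhds 0))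
    (ha : ∀ n, 0 < a n ∧ F (β₁ n) (β₂ n) (a n) = 0) :
    Tendsto (fun n => a n * β₂ n) atTop atTop := by
  rw [tendsto_atTop]
  intro C
  have hC1 : (1:ℝ) ≤ max C 1 := le_max_right _ _
  have hC0 : (0:ℝ) < max C 1 := by linarith
  have hδ : (0:ℝ) < min (2/5) (1/(5*max C 1)) := by positivity
  filter_upwards [hratio.eventually (eventually_lt_nhds hδ)] with n hn
  obtain ⟨hb1, hb12, hb21⟩ := h n
  obtain ⟨hav, hFn⟩ := ha n
  have hb2 : 0 < β₂ n := lt_trans hb1 hb12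
  have hr0 : 0 < β₁ n / β₂ n := div_pos hb1 hb2
  have ht0 : 0 < a n * β₂ n := mul_pos hav hb2
  have hkey : 1 - ((β₁ n / β₂ n) * (a n * β₂ n))^2
      ≤ ((a n * β₂ n)+1) * Real.exp (-(a n * β₂ n)) := by
    have hk := key_ineq (β₁ n) (β₂ n) (a n) hb1 hb2 hav hFn
    have e1 : (β₁ n / β₂ n) * (a n * β₂ n) = β₁ n * a n := by field_simp
    have e2 : β₂ n * a n = a n * β₂ n := mul_comm _ _
    rw [e1]
    rw [e2] at hk
    exact hk
  have hr25 : β₁ n / β₂ n < 2/5 := lt_of_lt_of_le hn (min_le_left _ _)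
  have hrC : β₁ n / β₂ n < 1/(5*max C 1) := lt_of_lt_of_le hn (min_le_right _ _)
  by_contra hcon
  push_neg at hcon
  have htC : a n * β₂ n < max C 1 := lt_of_lt_of_le hcon (le_max_left _ _)
  rcases le_or_gt (a n * β₂ n) (1/2) with hhalf | hhalf
  · exact small_case _ _ hr0 hr25 ht0 hhalf hkey
  · exact large_case _ _ _ hr0 ht0 hC0 hrC htC hhalf hkey


/-- Coordinate form of Theorems 1 and 2: as `β₁ⁿ/β₂ⁿ → 0` and `β₂ⁿ → β`, the coefficients
`β₂ⁿ/(4aⁿφⁿ)` and `β₂ⁿaⁿφⁿ` of the rescaled football metric `(β₂ⁿ/2)aⁿ·g_Foot` in the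
coordinate `u = aⁿ(β₁ⁿ+β₂ⁿ−τ)` converge to `eᵘ/(4(eᵘ−1))` and `β²(eᵘ−1)/eᵘ`, which are the
coefficients of the cone-cigar metric `g_{Cigar,β}` under the substitution
`u = log(1+r²)`. -/
theorem football_to_cone_cigar (β : ℝ) (hβ : β ∈ Set.Icc (0 : ℝ) 1)
    (β₁ β₂ a : ℕ → ℝ)
    (h : ∀ n, 0 < β₁ n ∧ β₁ n < β₂ n ∧ β₂ n ≤ 1)
    (hratio : Filter.Tendsto (fun n => β₁ n / β₂ n) Filter.atTop (nhds 0))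
    (hβ₂ : Filter.Tendsto β₂ Filter.atTop (nhds β))
    (ha : ∀ n, 0 < a n ∧ F (β₁ n) (β₂ n) (a n) = 0)
    (φ : ℕ → ℝ → ℝ)
    (hφ : ∀ n τ, φ n τ =
      (a n * β₁ n - 1) * (Real.exp (a n * τ) - 1) / (a n) ^ 2 + τ / a n) :
    ∀ u : ℝ, 0 < u →
      (Filter.Tendsto (fun n => β₂ n / (4 * a n * φ n (β₁ n + β₂ n - u / a n)))
        Filter.atTop (nhds (Real.exp u / (4 * (Real.exp u - 1))))) ∧
      (Filter.Tendsto (fun n => β₂ n * a n * φ n (β₁ n + β₂ n - u / a n))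
        Filter.atTop (nhds (β ^ 2 * (Real.exp u - 1) / Real.exp u))) ∧
      (∀ r : ℝ, 0 < r → u = Real.log (1 + r ^ 2) →
        Real.exp u / (4 * (Real.exp u - 1)) * (2 * r / (1 + r ^ 2)) ^ 2 =
          1 / (1 + r ^ 2) ∧
        β ^ 2 * (Real.exp u - 1) / Real.exp u = β ^ 2 * r ^ 2 / (1 + r ^ 2)) := by
  intro u hu
  have hEu1 : 1 < Real.exp u := by nlinarith [Real.add_one_le_exp u]
  have hEune : Real.exp u ≠ 0 := Real.exp_ne_zero u
  have hprodu : Real.exp (-u) * Real.exp u = 1 := by rw [← Real.exp_add]; simp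
  set c : ℝ := 1 - Real.exp (-u) with hc_def
  have hc : 0 < c := by
    have : Real.exp (-u) < 1 := by nlinarith [Real.exp_pos (-u)]
    simp only [hc_def]; linarith
  have ht := tendsto_t β₁ β₂ a h hratio ha
  have h0 : Tendsto (fun n => (c - u)/(a n * β₂ n)) atTop (nhds 0) := by
    have h1 := Tendsto.comp tendsto_inv_atTop_zero ht
    have h2 := h1.const_mul (c - u)
    simp only [Function.comp] at h2
    simpa [div_eq_mul_inv] using h2
  have hsum : Tendsto (fun n => c + (c - u)/(a n * β₂ n)) atTop (nhds c) := by
    simpa using tendsto_const_nhds.add h0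
  have hD : Tendsto (fun n => (a n * β₂ n) * c + (c - u)) atTop atTop :=
    tendsto_atTop_add_const_right _ _ (ht.atTop_mul_const hc)
  have hDpos : ∀ᶠ n in atTop, 0 < (a n * β₂ n) * c + (c - u) :=
    hD.eventually_gt_atTop 0
  refine ⟨?_, ?_, ?_⟩
  · -- first limit
    have lim1 : Tendsto (fun n => (4*(c + (c - u)/(a n * β₂ n)))⁻¹) atTop
        (nhds ((4*c)⁻¹)) := (hsum.const_mul 4).inv₀ (by positivity)
    have hval : (4*c)⁻¹ = Real.exp u / (4 * (Real.exp u - 1)) := by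
      have h9 : 4*c = (4*(Real.exp u - 1))/Real.exp u := by
        simp only [hc_def, Real.exp_neg]; field_simp
      rw [h9, inv_div]
    rw [hval] at lim1
    refine Filter.Tendsto.congr ?_ lim1
    intro n
    obtain ⟨hb1, hb12, hb21⟩ := h n
    obtain ⟨hav, hFn⟩ := ha n
    have hb2 : 0 < β₂ n := lt_trans hb1 hb12
    have hAne : a n ≠ 0 := ne_of_gt hav
    have hBne : β₂ n ≠ 0 := ne_of_gt hb2
    rw [hφ, phi_formula (β₁ n) (β₂ n) (a n) u hAne hFn, ← hc_def]
    have step1 : 4 * a n * (((a n * β₂ n + 1)*c - u) / a n ^ 2)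
        = (4 * ((a n * β₂ n + 1)*c - u)) / a n := by
      field_simp
    have step3 : 4*(c + (c - u)/(a n * β₂ n))
        = (4 * ((a n * β₂ n + 1)*c - u)) / (a n * β₂ n) := by
      field_simp; ring
    rw [step1, step3, inv_div, div_div_eq_mul_div]
    rw [mul_comm (β₂ n) (a n)]
  · -- second limit
    have lim2 := (hβ₂.pow 2).mul hsum
    have hval : β^2 * c = β ^ 2 * (Real.exp u - 1) / Real.exp u := by
      simp only [hc_def, Real.exp_neg]; field_simp
    rw [hval] at lim2
    refine Filter.Tendsto.congr ?_ lim2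
    intro n
    obtain ⟨hb1, hb12, hb21⟩ := h n
    obtain ⟨hav, hFn⟩ := ha n
    have hb2 : 0 < β₂ n := lt_trans hb1 hb12
    rw [hφ, phi_formula (β₁ n) (β₂ n) (a n) u (ne_of_gt hav) hFn, ← hc_def]
    field_simp
    ring
  · -- algebraic identities
    intro r hr hur
    have h1r : (0:ℝ) < 1 + r^2 := by positivity
    have hEu : Real.exp u = 1 + r^2 := by rw [hur, Real.exp_log h1r]
    have h2 : Real.exp u - 1 = r^2 := by rw [hEu]; ring
    have hrne : r ≠ 0 := ne_of_gt hr
    constructor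
    · rw [h2, hEu]
      field_simp
      ring
    · rw [h2, hEu]
end

section
/- For every c ∈ (0,1), the equation c·x − 1 + (x + 1)·exp(−x·(1+c)) = 0 has exactly one solution x₀ in (0, ∞), and x₀ < 1/c. Moreover, for any sequences (β₁ⁿ), (β₂ⁿ) with 0 < β₁ⁿ < β₂ⁿ, β₁ⁿ/β₂ⁿ → c and β₂ⁿ → 0, letting aⁿ be the unique positive zero of F_{β₁ⁿ,β₂ⁿ}, one has aⁿ·β₂ⁿ → x₀, and hence aⁿ·β₁ⁿ → c·x₀ ∈ (0,1). -/
/-!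
Writing `c = β₁ / β₂`, the substitution `y = β₂ x` turns `F β₁ β₂` into `F c 1`, so `a β₂` is
the positive zero of `F (β₁ / β₂) 1`. For `0 < c < 1` the function `F c 1` vanishes at `0`
together with its derivative, and its second derivative is negative on `(0, (1 - c)/(1 + c))`
and positive afterwards. Since the derivative tends to `c > 0` at infinity, it is first negative
and then positive, hence so is `F c 1` itself. This sign change at the zero `x₀` persists under
small perturbations of `c`, which traps the zero of `F (β₁ / β₂) 1` near `x₀` once `β₁ / β₂` is
close to `c`.
-/

open Filter Set Topology Real

def SignChangeAt (f : ℝ → ℝ) (z : ℝ) : Prop :=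
  (∀ t ∈ Ioo 0 z, f t < 0) ∧ ∀ t, z < t → 0 < f t

namespace SignChangeAt

variable {f : ℝ → ℝ} {z t : ℝ}

lemma le_of_neg (h : SignChangeAt f z) (ht : f t < 0) : t ≤ z :=
  le_of_not_gt fun hzt => (h.2 t hzt).not_gt ht

lemma le_of_pos (h : SignChangeAt f z) (ht₀ : 0 < t) (ht : 0 < f t) : z ≤ t :=
  le_of_not_gt fun htz => (h.1 t ⟨ht₀, htz⟩).not_gt ht

lemma eq_of_zero (h : SignChangeAt f z) (ht₀ : 0 < t) (ht : f t = 0) : t = z := by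
  rcases lt_trichotomy t z with htz | htz | hzt
  · exact absurd ht (h.1 t ⟨ht₀, htz⟩).ne
  · exact htz
  · exact absurd ht (h.2 t hzt).ne'

lemma tendsto {ι : Type*} {l : Filter ι} {G : ℝ → ℝ → ℝ} {u y : ι → ℝ} {c x₀ : ℝ}
    (hG : ∀ x, ContinuousAt (fun v => G v x) c) (hu : Tendsto u l (𝓝 c)) (hx₀ : 0 < x₀)
    (hc : SignChangeAt (G c) x₀) (hy : ∀ᶠ i in l, SignChangeAt (G (u i)) (y i)) :
    Tendsto y l (𝓝 x₀) := by
  have hGu : ∀ x, Tendsto (fun i => G (u i) x) l (𝓝 (G c x)) := fun x => (hG x).tendsto.comp hu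
  refine tendsto_order.2 ⟨fun b hb => ?_, fun b hb => ?_⟩
  · obtain ⟨s, hbs, hsx₀⟩ := exists_between (max_lt hb hx₀)
    have hs₀ : 0 < s := (le_max_right b 0).trans_lt hbs
    filter_upwards [hy, (hGu s).eventually_lt_const (hc.1 s ⟨hs₀, hsx₀⟩)] with i hyi hGi
    exact (le_max_left b 0).trans_lt hbs |>.trans_le (hyi.le_of_neg hGi)
  · obtain ⟨s, hx₀s, hsb⟩ := exists_between hb
    filter_upwards [hy, (hGu s).eventually_const_lt (hc.2 s hx₀s)] with i hyi hGi
    exact (hyi.le_of_pos (hx₀.trans hx₀s) hGi).trans_lt hsb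

end SignChangeAt

lemma exists_signChangeAt_of_deriv {f f' : ℝ → ℝ} {s b : ℝ} (hf : ∀ x, HasDerivAt f (f' x) x)
    (hf₀ : f 0 = 0) (hs : 0 < s) (hf' : SignChangeAt f' s) (hb₀ : 0 < b) (hb : 0 < f b) :
    ∃ z, 0 < z ∧ f z = 0 ∧ SignChangeAt f z := by
  have hcont : Continuous f := continuous_iff_continuousAt.2 fun x => (hf x).continuousAt
  have hanti : StrictAntiOn f (Icc 0 s) :=
    strictAntiOn_of_hasDerivWithinAt_neg (convex_Icc 0 s) hcont.continuousOn
      (fun x _ => (hf x).hasDerivWithinAt) fun x hx => hf'.1 x (by rwa [interior_Icc] at hx)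
  have hmono : StrictMonoOn f (Ici s) :=
    strictMonoOn_of_hasDerivWithinAt_pos (convex_Ici s) hcont.continuousOn
      (fun x _ => (hf x).hasDerivWithinAt) fun x hx => hf'.2 x (by rwa [interior_Ici] at hx)
  have hneg : ∀ t ∈ Ioc 0 s, f t < 0 := fun t ht =>
    hf₀ ▸ hanti ⟨le_rfl, hs.le⟩ ⟨ht.1.le, ht.2⟩ ht.1
  have hsb : s < b := by
    by_contra! hbs
    exact (hneg b ⟨hb₀, hbs⟩).not_gt hb
  obtain ⟨z, ⟨hsz, -⟩, hz⟩ :=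
    intermediate_value_Ioo hsb.le hcont.continuousOn ⟨hneg s ⟨hs, le_rfl⟩, hb⟩
  refine ⟨z, hs.trans hsz, hz, fun t ht => ?_, fun t hzt => ?_⟩
  · rcases le_or_gt t s with hts | hst
    · exact hneg t ⟨ht.1, hts⟩
    · exact hz ▸ hmono hst.le hsz.le ht.2
  · exact hz ▸ hmono hsz.le (hsz.trans hzt).le hzt

lemma F_one_apply (c x : ℝ) : F c 1 x = c * x - 1 + (x + 1) * exp (-x * (1 + c)) := by
  simp only [F, one_mul, add_comm c 1]

lemma F_eq_F_one_div {β₁ β₂ : ℝ} (hβ₂ : β₂ ≠ 0) (x : ℝ) :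
    F β₁ β₂ x = F (β₁ / β₂) 1 (x * β₂) := by
  have hexp : -(x * β₂) * (β₁ / β₂ + 1) = -x * (β₁ + β₂) := by field_simp
  simp only [F, hexp]
  field_simp

lemma mul_lt_one_of_F_eq_zero {β₁ β₂ x : ℝ} (hx : 0 < β₂ * x + 1) (h : F β₁ β₂ x = 0) :
    β₁ * x < 1 := by
  have := mul_pos hx (exp_pos (-x * (β₁ + β₂)))
  unfold F at h
  linarith

noncomputable def dF (c x : ℝ) : ℝ := c - exp (-x * (1 + c)) * (c + (1 + c) * x)

noncomputable def d2F (c x : ℝ) : ℝ := (1 + c) * exp (-x * (1 + c)) * ((1 + c) * x - (1 - c))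

lemma hasDerivAt_F_one (c x : ℝ) : HasDerivAt (F c 1) (dF c x) x := by
  rw [show F c 1 = fun y => c * y - 1 + (y + 1) * exp (-y * (1 + c)) from funext (F_one_apply c)]
  refine ((((hasDerivAt_id x).const_mul c).sub_const 1).add
    (((hasDerivAt_id x).add_const 1).mul
      ((hasDerivAt_id x).neg.mul_const (1 + c)).exp)).congr_deriv ?_
  simp only [dF, Pi.neg_apply, id]
  ring

lemma hasDerivAt_dF (c x : ℝ) : HasDerivAt (dF c) (d2F c x) x := by
  refine ((((hasDerivAt_id x).neg.mul_const (1 + c)).exp.mul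
    (((hasDerivAt_id x).const_mul (1 + c)).const_add c)).const_sub c).congr_deriv ?_
  simp only [d2F, Pi.neg_apply, id]
  ring

lemma signChangeAt_d2F {c : ℝ} (hc : -1 < c) : SignChangeAt (d2F c) ((1 - c) / (1 + c)) := by
  have hc' : 0 < 1 + c := by linarith
  refine ⟨fun t ht => ?_, fun t ht => ?_⟩
  · have := (lt_div_iff₀ hc').1 ht.2
    exact mul_neg_of_pos_of_neg (by positivity) (by linarith)
  · have := (div_lt_iff₀ hc').1 ht
    exact mul_pos (by positivity) (by linarith)

lemma tendsto_dF_atTop {c : ℝ} (hc : -1 < c) : Tendsto (dF c) atTop (𝓝 c) := by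
  have hu : Tendsto (fun x : ℝ => x * (1 + c)) atTop atTop :=
    tendsto_id.atTop_mul_const (by linarith)
  have hexp : Tendsto (fun u : ℝ => c * exp (-u) + u ^ 1 * exp (-u)) atTop (𝓝 0) := by
    simpa using (tendsto_exp_neg_atTop_nhds_zero.const_mul c).add
      (tendsto_pow_mul_exp_neg_atTop_nhds_zero 1)
  have h := (hexp.comp hu).const_sub c
  rw [sub_zero] at h
  refine h.congr fun x => ?_
  simp only [dF, Function.comp_apply, pow_one, neg_mul]
  ring

lemma exists_signChangeAt_dF {c : ℝ} (hc₀ : 0 < c) (hc₁ : c < 1) :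
    ∃ s, 0 < s ∧ dF c s = 0 ∧ SignChangeAt (dF c) s := by
  obtain ⟨b, hb, hb₀⟩ :=
    ((tendsto_dF_atTop (by linarith)).eventually_const_lt hc₀ |>.and (eventually_gt_atTop 0)).exists
  exact exists_signChangeAt_of_deriv (hasDerivAt_dF c) (by simp [dF])
    (div_pos (by linarith) (by linarith)) (signChangeAt_d2F (by linarith)) hb₀ hb

lemma exists_signChangeAt_F_one {c : ℝ} (hc₀ : 0 < c) (hc₁ : c < 1) :
    ∃ x₀, 0 < x₀ ∧ F c 1 x₀ = 0 ∧ SignChangeAt (F c 1) x₀ := by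
  obtain ⟨s, hs, -, hdF⟩ := exists_signChangeAt_dF hc₀ hc₁
  have hpos : 0 < F c 1 (1 / c) := by
    rw [F_one_apply, mul_one_div_cancel hc₀.ne', sub_self, zero_add]
    positivity
  exact exists_signChangeAt_of_deriv (hasDerivAt_F_one c) (by simp [F]) hs hdF
    (one_div_pos.2 hc₀) hpos

lemma signChangeAt_F_one {c x₀ : ℝ} (hc₀ : 0 < c) (hc₁ : c < 1) (hx₀ : 0 < x₀)
    (h : F c 1 x₀ = 0) : SignChangeAt (F c 1) x₀ := by
  obtain ⟨z, -, -, hz⟩ := exists_signChangeAt_F_one hc₀ hc₁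
  exact hz.eq_of_zero hx₀ h ▸ hz

/-- Lemma 6 of the paper: for `c ∈ (0,1)`, `cx − 1 + (x+1)e^{−x(1+c)} = 0` has exactly one
positive solution `x₀`, with `x₀ < 1/c`; moreover if `β₁ⁿ/β₂ⁿ → c` and `β₂ⁿ → 0`, then
`aⁿβ₂ⁿ → x₀` and `aⁿβ₁ⁿ → cx₀ ∈ (0,1)`, where `aⁿ` is the unique positive zero of
`F_{β₁ⁿ,β₂ⁿ}`. -/
theorem limit_comparable_angles (c : ℝ) (hc : c ∈ Set.Ioo (0 : ℝ) 1) :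
    (∃! x : ℝ, 0 < x ∧ c * x - 1 + (x + 1) * Real.exp (-x * (1 + c)) = 0) ∧
    ∀ x₀ : ℝ, 0 < x₀ → c * x₀ - 1 + (x₀ + 1) * Real.exp (-x₀ * (1 + c)) = 0 →
      x₀ < 1 / c ∧
      ∀ β₁ β₂ a : ℕ → ℝ, (∀ n, 0 < β₁ n ∧ β₁ n < β₂ n) →
        Filter.Tendsto (fun n => β₁ n / β₂ n) Filter.atTop (nhds c) →
        Filter.Tendsto β₂ Filter.atTop (nhds 0) →
        (∀ n, 0 < a n ∧ F (β₁ n) (β₂ n) (a n) = 0) →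
        Filter.Tendsto (fun n => a n * β₂ n) Filter.atTop (nhds x₀) ∧
        Filter.Tendsto (fun n => a n * β₁ n) Filter.atTop (nhds (c * x₀)) ∧
        c * x₀ ∈ Set.Ioo (0 : ℝ) 1 := by
  obtain ⟨hc₀, hc₁⟩ := hc
  simp only [← F_one_apply]
  obtain ⟨x₁, hx₁, hFx₁, hsign⟩ := exists_signChangeAt_F_one hc₀ hc₁
  refine ⟨⟨x₁, ⟨hx₁, hFx₁⟩, fun y hy => hsign.eq_of_zero hy.1 hy.2⟩, fun x₀ hx₀ hFx₀ => ?_⟩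
  have hcx₀ : c * x₀ < 1 := mul_lt_one_of_F_eq_zero (by linarith) hFx₀
  refine ⟨by rwa [lt_div_iff₀' hc₀], fun β₁ β₂ a hβ hratio _ ha => ?_⟩
  have hβ₂ n : 0 < β₂ n := (hβ n).1.trans (hβ n).2
  have hsignₙ n : SignChangeAt (F (β₁ n / β₂ n) 1) (a n * β₂ n) :=
    signChangeAt_F_one (div_pos (hβ n).1 (hβ₂ n)) ((div_lt_one (hβ₂ n)).2 (hβ n).2)
      (mul_pos (ha n).1 (hβ₂ n)) (F_eq_F_one_div (hβ₂ n).ne' (a n) ▸ (ha n).2)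
  have hlim : Tendsto (fun n => a n * β₂ n) atTop (𝓝 x₀) :=
    SignChangeAt.tendsto (G := fun c => F c 1) (fun x => by simp only [F]; fun_prop) hratio hx₀
      (signChangeAt_F_one hc₀ hc₁ hx₀ hFx₀) (Eventually.of_forall hsignₙ)
  refine ⟨hlim, mul_comm x₀ c ▸ (hlim.mul hratio).congr fun n => ?_, mul_pos hc₀ hx₀, hcx₀⟩
  field_simp [(hβ₂ n).ne']
end
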